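/- Let G be a simple-triangle graph with a model in which all triangle endpoints are distinct, where vertex v has apex point p_v on the top line L_1 and base interval I_v on the bottom line L_2, and two vertices are adjacent iff their triangles intersect. Label vertex v by the rank i of p_v among all apex points from left to right. Then for two vertices u, v with labels i < j, the interval I_u lies entirely to the left of I_v if and only if u and v are adjacent in the complement of G. Consequently, the word w obtained by listing the labels of the owners of all 2n interval endpoints in right-to-left order is a 12-representant of the complement of G. -/

import Mathlib

/-- The subword of `w` consisting of the occurrences of `x` and `y`. -/
def subw {n : ℕ} (w : List (Fin n)) (x y : Fin n) : List (Fin n) :=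
  w.filter fun a => decide (a = x ∨ a = y)

/-- A word has a 12-match if some letter is immediately followed by a strictly larger one. -/
def Has12 {n : ℕ} (s : List (Fin n)) : Prop :=
  ∃ a b : Fin n, a < b ∧ [a, b] <:+: s

/-- `w` 12-represents the labeled graph `G` on `Fin n`. -/
def Rep12 {n : ℕ} (w : List (Fin n)) (G : SimpleGraph (Fin n)) : Prop :=
  (∀ i : Fin n, i ∈ w) ∧
  ∀ x y : Fin n, x ≠ y → (G.Adj x y ↔ ¬ Has12 (subw w x y))

/-- A graph is 12-representable if some labeling of its vertices admits a 12-representant. -/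
def Rep12able {V : Type} [Fintype V] (G : SimpleGraph V) : Prop :=
  ∃ (f : V ≃ Fin (Fintype.card V)) (w : List (Fin (Fintype.card V))),
    Rep12 w (G.map f.toEmbedding)
/-- The filled triangle with apex `(p, 1)` on line `L₁` and base interval
`[ℓ, r]` on line `L₂` (the real line at height 0). -/
def triangleRegion (p ℓ r : ℝ) : Set (ℝ × ℝ) :=
  convexHull ℝ {(p, 1), (ℓ, 0), (r, 0)}

/-!
If `pu < pv`, the triangles with bases `[ℓu, ru]` and `[ℓv, rv]` meet iff `ℓv ≤ ru`: when
`ru < ℓv` the line through `(ru, 0)` and `(pu, 1)` separates them, and otherwise the right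
side of the first triangle crosses the left side of the second.

In the endpoint word read right to left, some occurrence of `x` precedes some occurrence
of `y` iff some endpoint of `I_x` lies right of some endpoint of `I_y`, i.e. iff
`ℓ y ≤ r x`. For `x < y` this is exactly a `12`-match in the two-letter subword, since
in a word over `{x, y}` an `x` before a `y` forces a factor `xy`.
-/

open scoped List

lemma segment_mem_triangleRegion {p ℓ r b t : ℝ} (hb : b = ℓ ∨ b = r) (ht₀ : 0 ≤ t)
    (ht₁ : t ≤ 1) : (b + t * (p - b), t) ∈ triangleRegion p ℓ r := by
  refine segment_subset_convexHull (x := (b, 0)) (y := (p, 1))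
    (by rcases hb with rfl | rfl <;> simp) (by simp) ⟨1 - t, t, by linarith, ht₀, by ring, ?_⟩
  ext
  · simp; ring
  · simp

lemma disjoint_triangleRegion {pu ℓu ru pv ℓv rv : ℝ} (hp : pu < pv) (hu : ℓu ≤ ru)
    (hv : ℓv ≤ rv) (h : ru < ℓv) :
    Disjoint (triangleRegion pu ℓu ru) (triangleRegion pv ℓv rv) := by
  let φ : ℝ × ℝ →ₗ[ℝ] ℝ := LinearMap.fst ℝ ℝ ℝ - (pu - ru) • LinearMap.snd ℝ ℝ ℝ
  have hφ : ∀ z, φ z = z.1 - (pu - ru) * z.2 := fun _ => rfl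
  have hsubu : triangleRegion pu ℓu ru ⊆ {z | φ z ≤ ru} :=
    convexHull_min (by simp [Set.insert_subset_iff, hφ, hu]) (convex_halfSpace_le φ.isLinear ru)
  have hsubv : triangleRegion pv ℓv rv ⊆ {z | ru < φ z} :=
    convexHull_min (by simp [Set.insert_subset_iff, hφ]; refine ⟨?_, ?_, ?_⟩ <;> linarith)
      (convex_halfSpace_gt φ.isLinear ru)
  exact Set.disjoint_of_subset hsubu hsubv
    (Set.disjoint_left.2 fun z hle hlt => (show φ z ≤ ru from hle).not_gt hlt)

lemma triangleRegion_inter_nonempty {pu ℓu ru pv ℓv rv : ℝ} (hp : pu < pv) (h : ℓv ≤ ru) :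
    (triangleRegion pu ℓu ru ∩ triangleRegion pv ℓv rv).Nonempty := by
  have hd : 0 < ru - ℓv + (pv - pu) := by linarith
  set t := (ru - ℓv) / (ru - ℓv + (pv - pu))
  have ht₀ : 0 ≤ t := div_nonneg (by linarith) hd.le
  have ht₁ : t ≤ 1 := (div_le_one hd).2 (by linarith)
  have hcross : ru + t * (pu - ru) = ℓv + t * (pv - ℓv) := by
    simp only [t]; field_simp; ring
  refine ⟨(ru + t * (pu - ru), t), segment_mem_triangleRegion (Or.inr rfl) ht₀ ht₁, ?_⟩
  rw [hcross]
  exact segment_mem_triangleRegion (Or.inl rfl) ht₀ ht₁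

lemma triangleRegion_inter_nonempty_iff {pu ℓu ru pv ℓv rv : ℝ} (hp : pu < pv) (hu : ℓu ≤ ru)
    (hv : ℓv ≤ rv) :
    (triangleRegion pu ℓu ru ∩ triangleRegion pv ℓv rv).Nonempty ↔ ℓv ≤ ru :=
  ⟨fun h => not_lt.1 fun hlt =>
    Set.not_disjoint_iff_nonempty_inter.2 h (disjoint_triangleRegion hp hu hv hlt),
    triangleRegion_inter_nonempty hp⟩

lemma List.Pairwise.pair_sublist_of_not_rel {α : Type*} {R : α → α → Prop} {a b : α} :
    ∀ {l : List α}, l.Pairwise R → a ∈ l → b ∈ l → a ≠ b → ¬ R b a → [a, b] <+ l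
  | [], _, ha, _, _, _ => absurd ha List.not_mem_nil
  | c :: t, hl, ha, hb, hab, hba => by
    rw [List.pairwise_cons] at hl
    rcases List.mem_cons.1 ha with rfl | hat
    · exact List.cons_sublist_cons.2
        (List.singleton_sublist.2 ((List.mem_cons.1 hb).resolve_left hab.symm))
    rcases List.mem_cons.1 hb with rfl | hbt
    · exact absurd (hl.1 a hat) hba
    · exact (pair_sublist_of_not_rel hl.2 hat hbt hab hba).cons c

lemma List.pair_infix_of_pair_sublist {α : Type*} {x y : α} (hxy : x ≠ y) :
    ∀ {s : List α}, (∀ a ∈ s, a = x ∨ a = y) → [x, y] <+ s → [x, y] <:+: s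
  | [], _, h => absurd h (by simp)
  | c :: t, hs, h => by
    have hst : ∀ a ∈ t, a = x ∨ a = y := fun a ha => hs a (List.mem_cons_of_mem c ha)
    rcases List.sublist_cons_iff.1 h with h | ⟨_, hc, hyt⟩
    · exact List.infix_cons (pair_infix_of_pair_sublist hxy hst h)
    obtain ⟨rfl, rfl⟩ := List.cons.inj hc
    obtain ⟨d, t', rfl⟩ := List.exists_cons_of_ne_nil (List.ne_nil_of_length_pos hyt.length_le)
    rcases hs d (by simp) with rfl | rfl
    · exact List.infix_cons (pair_infix_of_pair_sublist hxy hst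
        (List.cons_sublist_cons.2 (by simpa [hxy.symm] using hyt)))
    · exact ⟨[], t', rfl⟩

section

variable {n : ℕ}

lemma subw_comm (w : List (Fin n)) (x y : Fin n) : subw w x y = subw w y x :=
  List.filter_congr fun _ _ => decide_eq_decide.2 or_comm

lemma mem_of_mem_subw {w : List (Fin n)} {x y a : Fin n} (ha : a ∈ subw w x y) :
    a = x ∨ a = y := by
  simpa [subw] using (List.mem_filter.1 ha).2

lemma has12_subw_iff {w : List (Fin n)} {x y : Fin n} (hxy : x < y) :
    Has12 (subw w x y) ↔ [x, y] <+ w := by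
  constructor
  · rintro ⟨a, b, hab, hinf⟩
    obtain ⟨rfl, rfl⟩ : a = x ∧ b = y := by
      have := mem_of_mem_subw (hinf.subset (by simp) : a ∈ _)
      have := mem_of_mem_subw (hinf.subset (by simp) : b ∈ _)
      omega
    exact hinf.sublist.trans List.filter_sublist
  · intro h
    have hsub : [x, y] <+ subw w x y := by
      simpa [subw] using h.filter fun a => decide (a = x ∨ a = y)
    exact ⟨x, y, hxy, List.pair_infix_of_pair_sublist hxy.ne (fun _ => mem_of_mem_subw) hsub⟩

def endpoints (ℓ r : Fin n → ℝ) : List (ℝ × Fin n) :=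
  (List.finRange n).flatMap fun v => [(ℓ v, v), (r v, v)]

lemma mk_mem_endpoints {ℓ r : Fin n → ℝ} {a : ℝ} {v : Fin n} :
    (a, v) ∈ endpoints ℓ r ↔ a = ℓ v ∨ a = r v := by
  simp only [endpoints, List.mem_flatMap, List.mem_finRange, List.mem_cons, Prod.mk.injEq,
    List.not_mem_nil, or_false, true_and]
  grind

lemma pair_sublist_map_snd_iff {ℓ r : Fin n → ℝ} (hlr : ∀ v, ℓ v ≤ r v) {ps : List (ℝ × Fin n)}
    (hsort : (ps.map Prod.fst).Pairwise (· > ·)) (hperm : ps.Perm (endpoints ℓ r))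
    {x y : Fin n} (hxy : x ≠ y) : [x, y] <+ ps.map Prod.snd ↔ ℓ y ≤ r x := by
  have hpw : ps.Pairwise fun a b => b.1 < a.1 := List.pairwise_map.1 hsort
  have hmem : ∀ {a v}, (a, v) ∈ ps ↔ a = ℓ v ∨ a = r v := hperm.mem_iff.trans mk_mem_endpoints
  constructor
  · have hrel : (ps.map Prod.snd).Pairwise fun u v => ℓ v < r u := by
      refine List.pairwise_map.2 (hpw.imp_of_mem ?_)
      rintro ⟨a, u⟩ ⟨b, v⟩ ha hb (hba : b < a)
      have hau : a ≤ r u := by rcases hmem.1 ha with rfl | rfl; exacts [hlr u, le_rfl]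
      have hvb : ℓ v ≤ b := by rcases hmem.1 hb with rfl | rfl; exacts [le_rfl, hlr v]
      show ℓ v < r u
      linarith
    exact fun h => (List.pairwise_iff_forall_sublist.1 hrel h).le
  · intro h
    have := hpw.pair_sublist_of_not_rel (hmem.2 (Or.inr rfl)) (hmem.2 (Or.inl rfl))
      (by simp [hxy]) (not_lt.2 h) (a := (r x, x)) (b := (ℓ y, y))
    simpa using this.map Prod.snd

end

theorem rep12_complement_of_simpleTriangle_general {n : ℕ} (G : SimpleGraph (Fin n))
    (p ℓ r : Fin n → ℝ)
    (hlr : ∀ v, ℓ v < r v)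
    -- labels are by rank of apex points
    (hp : StrictMono p)
    -- adjacency is triangle intersection
    (hadj : ∀ u v : Fin n, u ≠ v →
      (G.Adj u v ↔ (triangleRegion (p u) (ℓ u) (r u) ∩
                    triangleRegion (p v) (ℓ v) (r v)).Nonempty)) :
    (∀ u v : Fin n, u < v → (r u < ℓ v ↔ Gᶜ.Adj u v)) ∧
    -- the word of endpoint owners, read right to left, 12-represents the complement
    ∀ (ps : List (ℝ × Fin n)),
      ((ps.map Prod.fst).Pairwise (· > ·)) →
      (ps.Perm ((List.finRange n).flatMap fun v => [(ℓ v, v), (r v, v)])) →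
      Rep12 (ps.map Prod.snd) Gᶜ := by
  have hle : ∀ v, ℓ v ≤ r v := fun v => (hlr v).le
  have hcompl : ∀ u v : Fin n, u < v → (Gᶜ.Adj u v ↔ ¬ ℓ v ≤ r u) := fun u v huv => by
    rw [SimpleGraph.compl_adj, hadj u v huv.ne,
      triangleRegion_inter_nonempty_iff (hp huv) (hle u) (hle v)]
    exact and_iff_right huv.ne
  refine ⟨fun u v huv => (hcompl u v huv).trans not_le |>.symm, fun ps hsort hperm => ⟨?_, ?_⟩⟩
  · exact fun v =>
      List.mem_map.2 ⟨(ℓ v, v), hperm.mem_iff.2 (mk_mem_endpoints.2 (Or.inl rfl)), rfl⟩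
  · intro x y hxy
    wlog hlt : x < y generalizing x y
    · rw [Gᶜ.adj_comm, subw_comm]
      exact this y x hxy.symm (lt_of_le_of_ne (not_lt.1 hlt) hxy.symm)
    rw [hcompl x y hlt, has12_subw_iff hlt, pair_sublist_map_snd_iff hle hsort hperm hxy]

/-- Given a simple-triangle model of `G` with distinct endpoints, vertices labeled
by apex rank (`p` strictly monotone): for `u < v`, the interval `I_u` lies
entirely to the left of `I_v` iff `uv` is an edge of the complement; and the word
listing the owners of the `2n` interval endpoints from right to left is a
12-representant of the complement of `G`. -/
theorem rep12_complement_of_simpleTriangle {n : ℕ} (G : SimpleGraph (Fin n))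
    (p ℓ r : Fin n → ℝ)
    (hlr : ∀ v, ℓ v < r v)
    -- labels are by rank of apex points
    (hp : StrictMono p)
    -- all interval endpoints are distinct
    (hlinj : Function.Injective ℓ) (hrinj : Function.Injective r)
    (hlne : ∀ u v, ℓ u ≠ r v)
    -- adjacency is triangle intersection
    (hadj : ∀ u v : Fin n, u ≠ v →
      (G.Adj u v ↔ (triangleRegion (p u) (ℓ u) (r u) ∩
                    triangleRegion (p v) (ℓ v) (r v)).Nonempty)) :
    (∀ u v : Fin n, u < v → (r u < ℓ v ↔ Gᶜ.Adj u v)) ∧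
    -- the word of endpoint owners, read right to left, 12-represents the complement
    ∀ (ps : List (ℝ × Fin n)),
      ((ps.map Prod.fst).Pairwise (· > ·)) →
      (ps.Perm ((List.finRange n).flatMap fun v => [(ℓ v, v), (r v, v)])) →
      Rep12 (ps.map Prod.snd) Gᶜ :=
  rep12_complement_of_simpleTriangle_general G p ℓ r hlr hp hadj
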